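/- Let W be a Weyl group of simply-laced type, w ∈ W, and β ∈ inv(w). Then there exist positive roots β1, ..., βk ∈ inv(w) such that β = β1 + ··· + βk and w covers w·r_{βi} in Bruhat order for each i = 1, ..., k. -/

import Mathlib

open Module

/-- A simply-laced (crystallographic, all roots of squared length 2) root system
in a real vector space `V`, equipped with a choice of positive system. -/
structure SimplyLacedRootSystem (V : Type*) [AddCommGroup V] [Module ℝ V] where
  /-- the symmetric bilinear form -/
  B : V →ₗ[ℝ] V →ₗ[ℝ] ℝ
  symm : ∀ x y : V, B x y = B y x
  /-- the set of roots -/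
  Phi : Set V
  finite : Phi.Finite
  /-- simply-laced: all roots have squared length 2 -/
  norm_two : ∀ α ∈ Phi, B α α = 2
  neg_mem : ∀ α ∈ Phi, -α ∈ Phi
  reflect_mem : ∀ α ∈ Phi, ∀ β ∈ Phi, β - B β α • α ∈ Phi
  crystallographic : ∀ α ∈ Phi, ∀ β ∈ Phi, ∃ k : ℤ, B β α = (k : ℝ)
  /-- the positive roots -/
  pos : Set V
  pos_subset : pos ⊆ Phi
  pos_iff : ∀ α ∈ Phi, (α ∈ pos ↔ -α ∉ pos)
  pos_add : ∀ α ∈ pos, ∀ β ∈ pos, α + β ∈ Phi → α + β ∈ pos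

namespace SimplyLacedRootSystem

variable {V : Type*} [AddCommGroup V] [Module ℝ V] (R : SimplyLacedRootSystem V)

/-- The reflection `r_α : y ↦ y - B(y, α) α` in the root `α`. -/
noncomputable def rfl' (α : V) (hα : α ∈ R.Phi) : V ≃ₗ[ℝ] V :=
  Module.reflection (R.norm_two α hα)

/-- The Weyl group: the group of linear automorphisms of `V` generated by the
reflections in the roots. -/
noncomputable def weylGroup : Subgroup (V ≃ₗ[ℝ] V) :=
  Subgroup.closure {g | ∃ (α : V) (hα : α ∈ R.Phi), g = R.rfl' α hα}

/-- The inversion set of `w`: positive roots sent to negative roots by `w`. -/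
def inv (w : V ≃ₗ[ℝ] V) : Set V := {α ∈ R.pos | w α ∉ R.pos}

/-- The length of `w` is the number of inversions. -/
noncomputable def len (w : V ≃ₗ[ℝ] V) : ℕ := (R.inv w).ncard

end SimplyLacedRootSystem

namespace SimplyLacedRootSystem

variable {V : Type*} [AddCommGroup V] [Module ℝ V] (R : SimplyLacedRootSystem V)

lemma zero_not_mem : (0 : V) ∉ R.Phi := by
  intro h
  have := R.norm_two 0 h
  simp at this

lemma zero_not_pos : (0 : V) ∉ R.pos := by
  intro h
  have h2 := (R.pos_iff 0 (R.pos_subset h)).1 h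
  rw [neg_zero] at h2
  exact h2 h

lemma neg_not_pos {x : V} (hx : x ∈ R.pos) : -x ∉ R.pos := by
  exact (R.pos_iff x (R.pos_subset hx)).1 hx

lemma pos_of_neg_not_pos {x : V} (hx : x ∈ R.Phi) (h : -x ∉ R.pos) : x ∈ R.pos := by
  by_contra hc
  have h3 := R.pos_iff (-x) (R.neg_mem x hx)
  rw [neg_neg] at h3
  exact h (h3.mpr hc)

lemma rfl'_apply (α : V) (hα : α ∈ R.Phi) (x : V) :
    R.rfl' α hα x = x - R.B x α • α := by
  rw [rfl', Module.reflection_apply, R.symm]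

lemma rfl'_mem_Phi (α : V) (hα : α ∈ R.Phi) {x : V} (hx : x ∈ R.Phi) :
    R.rfl' α hα x ∈ R.Phi := by
  rw [R.rfl'_apply]
  exact R.reflect_mem α hα x hx

lemma rfl'_rfl' (α : V) (hα : α ∈ R.Phi) (x : V) :
    R.rfl' α hα (R.rfl' α hα x) = x :=
  Module.involutive_reflection (R.norm_two α hα) x

lemma rfl'_self (α : V) (hα : α ∈ R.Phi) : R.rfl' α hα α = -α :=
  Module.reflection_apply_self (R.norm_two α hα)

lemma rfl'_neg (α : V) (hα : α ∈ R.Phi) (x : V) :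
    R.rfl' α hα (-x) = -(R.rfl' α hα x) := by
  exact map_neg _ x

lemma rfl'_mem_weylGroup (α : V) (hα : α ∈ R.Phi) :
    R.rfl' α hα ∈ R.weylGroup :=
  Subgroup.subset_closure ⟨α, hα, rfl⟩

lemma weyl_maps_Phi {w : V ≃ₗ[ℝ] V} (hw : w ∈ R.weylGroup) {x : V} (hx : x ∈ R.Phi) :
    w x ∈ R.Phi := by
  classical
  have main : ∀ g ∈ R.weylGroup, ∀ y ∈ R.Phi, g y ∈ R.Phi := by
    intro g hg
    refine Subgroup.closure_induction (p := fun g _ => ∀ y ∈ R.Phi, g y ∈ R.Phi)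
      ?_ ?_ ?_ ?_ hg
    · rintro g ⟨α, hα, rfl⟩ x hx
      exact R.rfl'_mem_Phi α hα hx
    · intro x hx; exact hx
    · intro g h _ _ hg hh x hx
      exact hg (h x) (hh x hx)
    · intro g _ hg x hx
      have hinj : Set.InjOn g R.Phi := fun a _ b _ hab => g.injective hab
      have himg : g '' R.Phi = R.Phi := by
        apply Set.eq_of_subset_of_ncard_le
        · rintro y ⟨a, ha, rfl⟩; exact hg a ha
        · rw [Set.ncard_image_of_injOn hinj]
        · exact R.finite
      have hx2 : x ∈ g '' R.Phi := himg.symm ▸ hx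
      obtain ⟨a, ha, hax⟩ := hx2
      have hh : (g⁻¹ : V ≃ₗ[ℝ] V) x = a := by
        rw [← hax]; exact g.symm_apply_apply a
      rw [hh]; exact ha
  exact main w hw x hx

/-- three-term recurrence sequences -/
private def seq {X : Type*} (f : X → X → X) (a b : X) : ℕ → X :=
  fun n => (Nat.rec (motive := fun _ => X × X) (a, b) (fun _ p => (p.2, f p.1 p.2)) n).1

private lemma seq_zero {X : Type*} (f : X → X → X) (a b : X) : seq f a b 0 = a := rfl

private lemma seq_one {X : Type*} (f : X → X → X) (a b : X) : seq f a b 1 = b := rfl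

private lemma seq_succ_succ {X : Type*} (f : X → X → X) (a b : X) (n : ℕ) :
    seq f a b (n + 2) = f (seq f a b n) (seq f a b (n + 1)) := rfl

/-- No pairing value `≥ 2` between distinct roots. -/
lemma B_lt_two {α γ : V} (hα : α ∈ R.Phi) (hγ : γ ∈ R.Phi) (hne : γ ≠ α) :
    R.B α γ < 2 := by
  classical
  by_contra hc
  push_neg at hc
  obtain ⟨c, hcB⟩ := R.crystallographic γ hγ α hα
  -- hcB : B α γ = c
  have hc2 : (2 : ℤ) ≤ c := by exact_mod_cast hcB ▸ hc
  -- α, γ are not proportional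
  have hind : ∀ t : ℝ, γ = t • α → False := by
    intro t ht
    have h1 : R.B α γ = t * 2 := by
      rw [ht, map_smul, smul_eq_mul, R.norm_two α hα]
    have h2 : R.B γ γ = t * t * 2 := by
      rw [ht]
      simp only [map_smul, LinearMap.smul_apply, smul_eq_mul]
      rw [R.norm_two α hα]; ring
    rw [R.norm_two γ hγ] at h2
    have ht1 : 1 ≤ t := by nlinarith [hcB ▸ h1, (show (2:ℝ) ≤ (c:ℤ) by exact_mod_cast hc2)]
    have ht2 : t = 1 := by nlinarith
    exact hne (by rw [ht, ht2, one_smul])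
  -- the sequences
  set v : ℕ → V := seq (fun x y => (c : ℝ) • y - x) γ α with hv
  set q : ℕ → ℤ := seq (fun x y => c * y - x) 1 0 with hq
  set p : ℕ → ℤ := seq (fun x y => c * y - x) 0 1 with hp
  have hvrec : ∀ n, v (n + 2) = (c : ℝ) • v (n + 1) - v n := fun n => rfl
  have hqrec : ∀ n, q (n + 2) = c * q (n + 1) - q n := fun n => rfl
  have hprec : ∀ n, p (n + 2) = c * p (n + 1) - p n := fun n => rfl
  have hv0 : v 0 = γ := rfl
  have hv1 : v 1 = α := rfl
  have hq0 : q 0 = 1 := rfl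
  have hq1 : q 1 = 0 := rfl
  have hp0 : p 0 = 0 := rfl
  have hp1 : p 1 = 1 := rfl
  -- main invariant
  have key : ∀ n, v n ∈ R.Phi ∧ v (n+1) ∈ R.Phi ∧ R.B (v (n+1)) (v n) = (c : ℝ) ∧
      v n = (p n : ℝ) • α + (q n : ℝ) • γ ∧ v (n+1) = (p (n+1) : ℝ) • α + (q (n+1) : ℝ) • γ := by
    intro n
    induction n with
    | zero =>
      refine ⟨hγ, hα, ?_, ?_, ?_⟩
      · rw [hv0, hv1, hcB]
      · rw [hv0, hq0, hp0]; simp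
      · rw [hv1, hq1, hp1]; simp
    | succ n ih =>
      obtain ⟨h1, h2, h3, h4, h5⟩ := ih
      have hmem : v (n + 2) ∈ R.Phi := by
        have := R.reflect_mem (v (n+1)) h2 (v n) h1
        rw [R.symm (v n) (v (n+1)), h3] at this
        have := R.neg_mem _ this
        rw [neg_sub] at this
        rw [hvrec n]
        convert this using 2
      have hB : R.B (v (n+2)) (v (n+1)) = (c : ℝ) := by
        rw [hvrec n]
        simp only [map_sub, map_smul, LinearMap.sub_apply, LinearMap.smul_apply, smul_eq_mul]
        rw [R.norm_two (v (n+1)) h2, R.symm (v n) (v (n+1)), h3]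
        ring
      have hcoord : v (n+2) = (p (n+2) : ℝ) • α + (q (n+2) : ℝ) • γ := by
        rw [hvrec n, h4, h5, hprec n, hqrec n]
        push_cast
        module
      exact ⟨h2, hmem, hB, h5, hcoord⟩
  -- q is strictly decreasing
  have qdec : ∀ n, q (n+1) < q n ∧ q (n+1) ≤ 0 := by
    intro n
    induction n with
    | zero => rw [hq0, hq1]; omega
    | succ n ih =>
      obtain ⟨ih1, ih2⟩ := ih
      have h := hqrec n
      have h2 : c * q (n+1) ≤ 2 * q (n+1) := by nlinarith
      show q (n+2) < q (n+1) ∧ q (n+2) ≤ 0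
      omega
  have qanti : StrictAnti q := strictAnti_nat_of_succ_lt (fun n => (qdec n).1)
  -- v is injective
  have vinj : Function.Injective v := by
    intro n m hnm
    by_contra hne2
    have hqne : q n ≠ q m := fun h => hne2 (qanti.injective h)
    have h4n := (key n).2.2.2.1
    have h4m := (key m).2.2.2.1
    rw [hnm] at h4n
    have heq : ((q n : ℝ) - (q m : ℝ)) • γ = ((p m : ℝ) - (p n : ℝ)) • α := by
      have := h4n.symm.trans h4m
      -- (p n) • α + (q n) • γ = (p m) • α + (q m) • γ
      rw [sub_smul, sub_smul]
      linear_combination (norm := module) this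
    have hqne' : ((q n : ℝ) - (q m : ℝ)) ≠ 0 := by
      intro h
      apply hqne
      have : (q n : ℝ) = (q m : ℝ) := by linarith [sub_eq_zero.mp h]
      exact_mod_cast this
    apply hind ((((q n : ℝ) - (q m : ℝ))⁻¹) * ((p m : ℝ) - (p n : ℝ)))
    rw [mul_smul, ← heq, smul_smul, inv_mul_cancel₀ hqne', one_smul]
  exact (Set.infinite_of_injective_forall_mem vinj (fun n => (key n).1)) R.finite

lemma B_mem {α γ : V} (hα : α ∈ R.Phi) (hγ : γ ∈ R.Phi) (h1 : γ ≠ α) (h2 : γ ≠ -α) :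
    R.B α γ = -1 ∨ R.B α γ = 0 ∨ R.B α γ = 1 := by
  obtain ⟨c, hcB⟩ := R.crystallographic γ hγ α hα
  have hu : R.B α γ < 2 := R.B_lt_two hα hγ h1
  have hl : R.B α (-γ) < 2 := by
    refine R.B_lt_two hα (R.neg_mem γ hγ) ?_
    intro h; exact h2 (by rw [← h, neg_neg])
  rw [map_neg] at hl
  rw [hcB] at hu hl ⊢
  have : c = -1 ∨ c = 0 ∨ c = 1 := by
    have u1 : c < 2 := by exact_mod_cast hu
    have u2 : -(c:ℝ) < 2 := by exact_mod_cast hl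
    have u2' : -2 < c := by exact_mod_cast (by linarith : (-2:ℝ) < c)
    omega
  rcases this with h | h | h
  · left; rw [h]; norm_num
  · right; left; rw [h]; norm_num
  · right; right; rw [h]; norm_num

lemma add_mem_of_B_neg_one {α γ : V} (hα : α ∈ R.Phi) (hγ : γ ∈ R.Phi)
    (h : R.B α γ = -1) : α + γ ∈ R.Phi := by
  have := R.reflect_mem γ hγ α hα
  rw [h] at this
  simpa [sub_neg_eq_add] using this

/-- the "pair set" of a positive root -/
def P (β : V) : Set V := {x | x ∈ R.pos ∧ β - x ∈ R.pos}

lemma P_finite (β : V) : (R.P β).Finite :=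
  R.finite.subset (fun x hx => R.pos_subset hx.1)

lemma P_subset_pos (β : V) : R.P β ⊆ R.pos := fun _ hx => hx.1

lemma beta_not_mem_P {β : V} : β ∉ R.P β := by
  rintro ⟨h1, h2⟩
  rw [sub_self] at h2
  exact R.zero_not_pos h2

lemma B_minus_one_of_sum {x y : V} (hx : x ∈ R.Phi) (hy : y ∈ R.Phi)
    (hxy : x + y ∈ R.Phi) : R.B x y = -1 := by
  have h := R.norm_two (x + y) hxy
  simp only [map_add, LinearMap.add_apply] at h
  rw [R.norm_two x hx, R.norm_two y hy, R.symm y x] at h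
  linarith

lemma B_self_P {β : V} (hβ : β ∈ R.pos) {x : V} (hx : x ∈ R.P β) :
    R.B x β = 1 := by
  obtain ⟨hx1, hx2⟩ := hx
  have hxΦ := R.pos_subset hx1
  have hyΦ := R.pos_subset hx2
  have hsum : x + (β - x) ∈ R.Phi := by
    rw [add_sub_cancel]; exact R.pos_subset hβ
  have h := R.B_minus_one_of_sum hxΦ hyΦ hsum
  have : R.B x β = R.B x x + R.B x (β - x) := by
    rw [← map_add]
    congr 1
    abel
  rw [this, R.norm_two x hxΦ, h]
  norm_num

lemma mem_P_iff {β : V} (hβ : β ∈ R.pos) (x : V) :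
    x ∈ R.P β ↔ x ∈ R.pos ∧ x ≠ β ∧ R.rfl' β (R.pos_subset hβ) x ∉ R.pos := by
  have hβΦ := R.pos_subset hβ
  constructor
  · intro hx
    obtain ⟨hx1, hx2⟩ := hx
    refine ⟨hx1, ?_, ?_⟩
    · intro h; rw [h, sub_self] at hx2; exact R.zero_not_pos hx2
    · rw [R.rfl'_apply, R.B_self_P hβ ⟨hx1, hx2⟩, one_smul]
      have : x - β = -(β - x) := by abel
      rw [this]
      exact R.neg_not_pos hx2
  · rintro ⟨hx1, hx2, hx3⟩
    have hxΦ := R.pos_subset hx1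
    have hxneg : x ≠ -β := by
      intro h
      exact R.neg_not_pos hβ (h ▸ hx1)
    rw [R.rfl'_apply] at hx3
    rcases R.B_mem hβΦ hxΦ hx2 hxneg with hB | hB | hB
    · rw [R.symm β x] at hB
      exfalso
      have hsum := R.add_mem_of_B_neg_one hxΦ hβΦ hB
      have : x - R.B x β • β = x + β := by rw [hB]; module
      rw [this] at hx3
      exact hx3 (R.pos_add x hx1 β hβ hsum)
    · exfalso
      rw [R.symm β x] at hB
      rw [hB, zero_smul, sub_zero] at hx3
      exact hx3 hx1
    · rw [R.symm β x] at hB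
      rw [hB, one_smul] at hx3
      have hmem : x - β ∈ R.Phi := by
        have := R.rfl'_mem_Phi β hβΦ hxΦ
        rw [R.rfl'_apply, hB, one_smul] at this
        exact this
      refine ⟨hx1, ?_⟩
      have h2 := R.pos_of_neg_not_pos (x := β - x) ?_ ?_
      · exact h2
      · have : β - x = -(x - β) := by abel
        rw [this]; exact R.neg_mem _ hmem
      · have : -(β - x) = x - β := by abel
        rw [this]; exact hx3

/-- the sum-of-positive-roots functional -/
noncomputable def m (γ : V) : ℝ := ∑ x ∈ (R.finite.subset R.pos_subset).toFinset, R.B γ x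

lemma m_add (x y : V) : R.m (x + y) = R.m x + R.m y := by
  simp [m, ← Finset.sum_add_distrib]

lemma m_eq {β : V} (hβ : β ∈ R.pos) : R.m β = 2 + ((R.P β).ncard : ℝ) := by
  classical
  have hβΦ := R.pos_subset hβ
  set posF : Finset V := (R.finite.subset R.pos_subset).toFinset with hposF
  have hmemF : ∀ x : V, x ∈ posF ↔ x ∈ R.pos := by
    intro x; rw [hposF, Set.Finite.mem_toFinset]
  have hβF : β ∈ posF := (hmemF β).mpr hβ
  have hsplit : R.m β = R.B β β + ∑ x ∈ posF.erase β, R.B β x := by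
    rw [m, ← Finset.add_sum_erase _ _ hβF]
  set Pf : Finset V := (posF.erase β).filter (· ∈ R.P β) with hPf
  set Qf : Finset V := (posF.erase β).filter (· ∉ R.P β) with hQf
  have hPQ : ∑ x ∈ posF.erase β, R.B β x = ∑ x ∈ Pf, R.B β x + ∑ x ∈ Qf, R.B β x :=
    (Finset.sum_filter_add_sum_filter_not _ _ _).symm
  -- sum over Pf : every term is 1
  have hPsum : ∑ x ∈ Pf, R.B β x = (Pf.card : ℝ) := by
    rw [Finset.sum_congr rfl (fun x hx => ?_), Finset.sum_const, nsmul_eq_mul, mul_one]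
    rw [hPf, Finset.mem_filter] at hx
    rw [R.symm β x]
    exact R.B_self_P hβ hx.2
  -- Pf.card = ncard of P β
  have hPcard : Pf.card = (R.P β).ncard := by
    have : Pf = (R.P_finite β).toFinset := by
      ext x
      rw [hPf, Finset.mem_filter, Set.Finite.mem_toFinset, Finset.mem_erase, hmemF]
      constructor
      · rintro ⟨_, hx⟩; exact hx
      · intro hx
        exact ⟨⟨fun h => R.beta_not_mem_P (h ▸ hx), hx.1⟩, hx⟩
    rw [this, Set.ncard_eq_toFinset_card _ (R.P_finite β)]
  -- sum over Qf is zero by the reflection involution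
  have hQsum : ∑ x ∈ Qf, R.B β x = 0 := by
    have hQmem : ∀ x ∈ Qf, x ∈ R.pos ∧ x ≠ β ∧ x ∉ R.P β := by
      intro x hx
      rw [hQf, Finset.mem_filter, Finset.mem_erase, hmemF] at hx
      exact ⟨hx.1.2, hx.1.1, hx.2⟩
    refine Finset.sum_involution (fun x _ => R.rfl' β hβΦ x) ?_ ?_ ?_ ?_
    · intro a _
      show R.B β a + R.B β (R.rfl' β hβΦ a) = 0
      rw [R.rfl'_apply, map_sub, map_smul, smul_eq_mul, R.norm_two β hβΦ, R.symm a β]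
      ring
    · intro a ha hfa
      show R.rfl' β hβΦ a ≠ a
      rw [R.rfl'_apply]
      intro h
      have h0 : R.B a β • β = 0 := by
        have := sub_eq_self.mp h
        exact this
      rcases smul_eq_zero.mp h0 with h1 | h1
      · rw [R.symm β a] at hfa; exact hfa h1
      · exact R.zero_not_mem (h1 ▸ hβΦ)
    · intro a ha
      show R.rfl' β hβΦ a ∈ Qf
      obtain ⟨ha1, ha2, ha3⟩ := hQmem a ha
      have haΦ := R.pos_subset ha1
      have hra_pos : R.rfl' β hβΦ a ∈ R.pos := by
        by_contra hc
        exact ha3 ((R.mem_P_iff hβ a).mpr ⟨ha1, ha2, hc⟩)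
      rw [hQf, Finset.mem_filter, Finset.mem_erase, hmemF]
      refine ⟨⟨?_, hra_pos⟩, ?_⟩
      · intro h
        have h2 : a = R.rfl' β hβΦ (R.rfl' β hβΦ a) := (R.rfl'_rfl' β hβΦ a).symm
        rw [h, R.rfl'_self] at h2
        exact R.neg_not_pos hβ (h2 ▸ ha1)
      · intro hc
        rw [R.mem_P_iff hβ] at hc
        rw [R.rfl'_rfl'] at hc
        exact hc.2.2 ha1
    · intro a _
      show R.rfl' β hβΦ (R.rfl' β hβΦ a) = a
      exact R.rfl'_rfl' β hβΦ a
  rw [hsplit, hPQ, hPsum, hQsum, R.norm_two β hβΦ, hPcard]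
  ring

lemma comp_closed {β : V} (hβ : β ∈ R.pos) {x : V} (h1 : x ∈ R.pos) (h2 : x ≠ β)
    (h3 : x ∉ R.P β) :
    R.rfl' β (R.pos_subset hβ) x ∈ R.pos ∧ R.rfl' β (R.pos_subset hβ) x ≠ β ∧
      R.rfl' β (R.pos_subset hβ) x ∉ R.P β := by
  have hβΦ := R.pos_subset hβ
  have hra_pos : R.rfl' β hβΦ x ∈ R.pos := by
    by_contra hc
    exact h3 ((R.mem_P_iff hβ x).mpr ⟨h1, h2, hc⟩)
  refine ⟨hra_pos, ?_, ?_⟩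
  · intro h
    have h2' : x = R.rfl' β hβΦ (R.rfl' β hβΦ x) := (R.rfl'_rfl' β hβΦ x).symm
    rw [h, R.rfl'_self] at h2'
    exact R.neg_not_pos hβ (h2' ▸ h1)
  · intro hc
    rw [R.mem_P_iff hβ, R.rfl'_rfl'] at hc
    exact hc.2.2 h1

lemma P_sub {β : V} {x : V} (hx : x ∈ R.P β) : β - x ∈ R.P β := by
  refine ⟨hx.2, ?_⟩
  have : β - (β - x) = x := by abel
  rw [this]; exact hx.1

lemma rfl'_eq_sub {β : V} (hβ : β ∈ R.pos) {x : V} (hx : x ∈ R.P β) :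
    R.rfl' β (R.pos_subset hβ) x = -(β - x) := by
  rw [R.rfl'_apply, R.B_self_P hβ hx, one_smul]
  abel

lemma inv_subset_pos (w : V ≃ₗ[ℝ] V) : R.inv w ⊆ R.pos := fun _ h => h.1

lemma inv_finite (w : V ≃ₗ[ℝ] V) : (R.inv w).Finite :=
  R.finite.subset (fun x hx => R.pos_subset (hx.1))

lemma w_pos_of_not_inv {w : V ≃ₗ[ℝ] V} {x : V} (hx : x ∈ R.pos) (h : x ∉ R.inv w) :
    w x ∈ R.pos := by
  by_contra hc
  exact h ⟨hx, hc⟩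

/-- the key covering-length computation -/
lemma cover_of_no_double {w : V ≃ₗ[ℝ] V} (hw : w ∈ R.weylGroup) {β : V} (hβ : β ∈ R.inv w)
    (hno : ∀ x ∈ R.P β, ¬(x ∈ R.inv w ∧ β - x ∈ R.inv w)) :
    R.len w = R.len (w * R.rfl' β (R.pos_subset hβ.1)) + 1 := by
  classical
  obtain ⟨hβpos, hβneg⟩ := hβ
  have hβΦ := R.pos_subset hβpos
  set r := R.rfl' β hβΦ with hr
  set I := R.inv w with hI
  set J := R.inv (w * r) with hJ
  set N : Set V := insert β (R.P β) with hN
  have hNpos : N ⊆ R.pos := by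
    rintro x (rfl | hx)
    · exact hβpos
    · exact hx.1
  have hNfin : N.Finite := R.finite.subset (fun x hx => R.pos_subset (hNpos hx))
  have hIfin := R.inv_finite w
  have hJfin := R.inv_finite (w * r)
  have hβI : β ∈ I := ⟨hβpos, hβneg⟩
  have hwr : ∀ x : V, (w * r) x = w (r x) := fun x => rfl
  -- Claim 1 : r '' (J \ N) = I \ N
  have claim1 : r '' (J \ N) = I \ N := by
    ext y
    constructor
    · rintro ⟨x, ⟨hxJ, hxN⟩, rfl⟩
      have hx1 : x ∈ R.pos := hxJ.1
      have hx2 : x ≠ β := fun h => hxN (h ▸ Set.mem_insert β _)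
      have hx3 : x ∉ R.P β := fun h => hxN (Set.mem_insert_of_mem _ h)
      obtain ⟨hc1, hc2, hc3⟩ := R.comp_closed hβpos hx1 hx2 hx3
      refine ⟨⟨hc1, ?_⟩, ?_⟩
      · exact (hwr x ▸ hxJ.2)
      · rintro (h | h)
        · exact hc2 h
        · exact hc3 h
    · rintro ⟨hyI, hyN⟩
      have hy1 : y ∈ R.pos := hyI.1
      have hy2 : y ≠ β := fun h => hyN (h ▸ Set.mem_insert β _)
      have hy3 : y ∉ R.P β := fun h => hyN (Set.mem_insert_of_mem _ h)
      obtain ⟨hc1, hc2, hc3⟩ := R.comp_closed hβpos hy1 hy2 hy3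
      refine ⟨r y, ⟨⟨hc1, ?_⟩, ?_⟩, R.rfl'_rfl' β hβΦ y⟩
      · rw [hwr, R.rfl'_rfl']
        exact hyI.2
      · rintro (h | h)
        · exact hc2 h
        · exact hc3 h
  -- Claim 2 : (fun x => -(r x)) '' (J ∩ N) = N \ I
  have hrself : r β = -β := R.rfl'_self β hβΦ
  have hrr : ∀ x, r (r x) = x := R.rfl'_rfl' β hβΦ
  have hsigmaN : ∀ x ∈ N, -(r x) ∈ N := by
    intro x hx
    rcases hx with h | hx
    · subst h
      rw [hrself, neg_neg]; exact Set.mem_insert x _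
    · have := R.rfl'_eq_sub hβpos hx
      rw [this, neg_neg]
      exact Set.mem_insert_of_mem _ (R.P_sub hx)
  have hsigmainv : ∀ x, -(r (-(r x))) = x := by
    intro x
    rw [map_neg, neg_neg, R.rfl'_rfl']
  have claim2 : (fun x => -(r x)) '' (J ∩ N) = N \ I := by
    ext y
    constructor
    · rintro ⟨x, ⟨hxJ, hxN⟩, rfl⟩
      refine ⟨hsigmaN x hxN, ?_⟩
      intro hc
      have hx1 : w (r x) ∈ R.Phi :=
        R.weyl_maps_Phi hw (R.rfl'_mem_Phi β hβΦ (R.pos_subset (hNpos hxN)))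
      have : w (-(r x)) ∈ R.pos := by
        rw [map_neg]
        refine R.pos_of_neg_not_pos (R.neg_mem _ hx1) ?_
        rw [neg_neg]
        exact hwr x ▸ hxJ.2
      exact (hc.2 : w (-(r x)) ∉ R.pos) this
    · rintro ⟨hyN, hyI⟩
      refine ⟨-(r y), ⟨⟨?_, ?_⟩, hsigmaN y hyN⟩, hsigmainv y⟩
      · exact hNpos (hsigmaN y hyN)
      · have h5 : (w * r) (-(r y)) = -(w y) := by
          rw [hwr, map_neg r, hrr, map_neg]
        rw [h5]
        have hwy : w y ∈ R.pos := R.w_pos_of_not_inv (hNpos hyN) hyI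
        exact R.neg_not_pos hwy
  -- Claim 3 : (fun x => β - x) '' (I ∩ R.P β) = R.P β \ I
  have claim3 : (fun x => β - x) '' (I ∩ R.P β) = R.P β \ I := by
    ext y
    constructor
    · rintro ⟨x, ⟨hxI, hxP⟩, rfl⟩
      refine ⟨R.P_sub hxP, ?_⟩
      intro hc
      exact hno x hxP ⟨hxI, hc⟩
    · rintro ⟨hyP, hyI⟩
      refine ⟨β - y, ⟨?_, R.P_sub hyP⟩, by simp⟩
      constructor
      · exact (R.P_sub hyP).1
      · intro hc
        have hwy : w y ∈ R.pos := R.w_pos_of_not_inv hyP.1 hyI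
        have hsum : w y + w (β - y) ∈ R.Phi := by
          rw [← map_add]
          have : y + (β - y) = β := by abel
          rw [this]
          exact R.weyl_maps_Phi hw hβΦ
        have := R.pos_add (w y) hwy (w (β - y)) hc hsum
        rw [← map_add] at this
        have h2 : y + (β - y) = β := by abel
        rw [h2] at this
        exact hβneg this
  -- counting
  have hrinj : Function.Injective (r : V → V) := r.injective
  have hsinj : Function.Injective (fun x : V => -(r x)) := fun a b h => by
    have := neg_injective h
    exact r.injective this
  have htinj : Function.Injective (fun x : V => β - x) := fun a b h => by
    have h' : β - a = β - b := h
    have := congrArg (fun z => β - z) h'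
    simpa using h'

  have e1 : (J \ N).ncard = (I \ N).ncard := by
    rw [← claim1, Set.ncard_image_of_injective _ hrinj]
  have e2 : (J ∩ N).ncard = (N \ I).ncard := by
    rw [← claim2, Set.ncard_image_of_injective _ hsinj]
  have e3 : (I ∩ R.P β).ncard = (R.P β \ I).ncard := by
    rw [← claim3, Set.ncard_image_of_injective _ htinj]
  have hIN : I ∩ N = insert β (I ∩ R.P β) := by
    ext x
    constructor
    · rintro ⟨hxI, (rfl | hxP)⟩
      · exact Set.mem_insert x _
      · exact Set.mem_insert_of_mem _ ⟨hxI, hxP⟩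
    · rintro (rfl | ⟨hxI, hxP⟩)
      · exact ⟨hβI, Set.mem_insert x _⟩
      · exact ⟨hxI, Set.mem_insert_of_mem _ hxP⟩
  have hNI : N \ I = R.P β \ I := by
    ext x
    constructor
    · rintro ⟨(rfl | hxP), hxI⟩
      · exact absurd hβI hxI
      · exact ⟨hxP, hxI⟩
    · rintro ⟨hxP, hxI⟩
      exact ⟨Set.mem_insert_of_mem _ hxP, hxI⟩
  have hβnotIP : β ∉ I ∩ R.P β := fun h => R.beta_not_mem_P h.2
  have hIPfin : (I ∩ R.P β).Finite := hIfin.inter_of_left _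
  have hA1 : (I ∩ N).ncard = (I ∩ R.P β).ncard + 1 := by
    rw [hIN, Set.ncard_insert_of_notMem hβnotIP hIPfin]
  have hlenw : R.len w = (I ∩ N).ncard + (I \ N).ncard := by
    rw [len, ← Set.ncard_inter_add_ncard_diff_eq_ncard I N hIfin]
  have hlenwr : R.len (w * r) = (J ∩ N).ncard + (J \ N).ncard := by
    rw [len, ← Set.ncard_inter_add_ncard_diff_eq_ncard J N hJfin]
  rw [hlenw, hlenwr, hA1, e1, e2, hNI, ← e3]
  ring

end SimplyLacedRootSystem

/-- Let `W` be a simply-laced Weyl group, `w ∈ W` and `β ∈ inv(w)`.  Then there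
exist positive roots `β₁, …, β_k ∈ inv(w)` with `β = β₁ + ⋯ + β_k` such that `w`
covers `w r_{βᵢ}` in Bruhat order (i.e. `ℓ(w) = ℓ(w r_{βᵢ}) + 1`) for each `i`. -/
theorem stmt_2 {V : Type*} [AddCommGroup V] [Module ℝ V]
    (R : SimplyLacedRootSystem V) (w : V ≃ₗ[ℝ] V) (hw : w ∈ R.weylGroup)
    (β : V) (hβ : β ∈ R.inv w) :
    ∃ l : List V, l ≠ [] ∧ l.sum = β ∧
      ∀ γ ∈ l, ∃ hγ : γ ∈ R.inv w,
        R.len w = R.len (w * R.rfl' γ (R.pos_subset hγ.1)) + 1 := by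
  classical
  suffices h : ∀ n : ℕ, ∀ β : V, β ∈ R.inv w → (R.P β).ncard < n →
      ∃ l : List V, l ≠ [] ∧ l.sum = β ∧
        ∀ γ ∈ l, ∃ hγ : γ ∈ R.inv w,
          R.len w = R.len (w * R.rfl' γ (R.pos_subset hγ.1)) + 1 by
    exact h ((R.P β).ncard + 1) β hβ (Nat.lt_succ_self _)
  intro n
  induction n with
  | zero => intro β _ h; omega
  | succ n ih =>
    intro β hβ hcard
    by_cases hdouble : ∃ x ∈ R.P β, x ∈ R.inv w ∧ β - x ∈ R.inv w
    · obtain ⟨x, hxP, hxI, hxI2⟩ := hdouble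
      have hβpos : β ∈ R.pos := hβ.1
      have hm : R.m x + R.m (β - x) = R.m β := by
        rw [← R.m_add]
        congr 1
        abel
      rw [R.m_eq hxP.1, R.m_eq hxP.2, R.m_eq hβpos] at hm
      have hnat : (R.P x).ncard + (R.P (β - x)).ncard + 2 = (R.P β).ncard := by
        have : ((R.P x).ncard : ℝ) + ((R.P (β - x)).ncard : ℝ) + 2 = ((R.P β).ncard : ℝ) := by
          linarith
        exact_mod_cast this
      obtain ⟨l1, hl1ne, hl1sum, hl1mem⟩ := ih x hxI (by omega)
      obtain ⟨l2, hl2ne, hl2sum, hl2mem⟩ := ih (β - x) hxI2 (by omega)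
      refine ⟨l1 ++ l2, ?_, ?_, ?_⟩
      · simp [hl1ne]
      · rw [List.sum_append, hl1sum, hl2sum]
        abel
      · intro γ hγ
        rcases List.mem_append.mp hγ with h | h
        · exact hl1mem γ h
        · exact hl2mem γ h
    · push_neg at hdouble
      refine ⟨[β], by simp, by simp, ?_⟩
      intro γ hγ
      rw [List.mem_singleton] at hγ
      subst hγ
      exact ⟨hβ, R.cover_of_no_double hw hβ (fun x hx hc => hdouble x hx hc.1 hc.2)⟩
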